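/- Let N = 2 and β, β′ ∈ ℝ, and let L* be the two-bath adjoint Lindblad generator (baths coupled at sites 1 and 2). Define the 4×4 matrix ρ^{β,β′} := ((ρ_β+ρ_{β′})/2) ⊗ ((ρ_β+ρ_{β′})/2) − (1/8)(β₀−β₀′)² σz⊗σz + ((β₀−β₀′)/4)(n₊⊗n₋ − n₋⊗n₊) + i((β₀−β₀′)/4)(σ₊⊗σ₋ − σ₋⊗σ₊). Then ρ^{β,β′} is a density matrix (Hermitian, positive semidefinite, trace 1) and L*(ρ^{β,β′}) = 0. -/

import Mathlib

/-!
`ρ^{β,β'}` commutes with the total magnetization `σz⊗I + I⊗σz`, so it is determined by the four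
populations of `|00⟩, |01⟩, |10⟩, |11⟩` and the single coherence `c = ⟨01|ρ|10⟩`. The generator
`L*` preserves this class of matrices: on it, the dissipators act as a classical rate equation on
the populations and damp `c`, while the hopping part of `H_S` couples the populations of `|01⟩`
and `|10⟩` to `Im c`. Stationarity thus becomes five polynomial identities in `β₀, β₀′`.
Positivity reduces to the `2 × 2` block on `span {|01⟩, |10⟩}`, i.e. to `|c|² ≤ p q` for its
diagonal entries `p, q = s ± δ/4`, where `c = iδ/4` and `s ≥ 3|δ|/8` for `δ = β₀ - β₀′`.
-/

open Matrix Complex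
open scoped Kronecker ComplexOrder

noncomputable section

def sx : Matrix (Fin 2) (Fin 2) ℂ := !![0, 1; 1, 0]
def sy : Matrix (Fin 2) (Fin 2) ℂ := !![0, -Complex.I; Complex.I, 0]
def sz : Matrix (Fin 2) (Fin 2) ℂ := !![1, 0; 0, -1]
def sp : Matrix (Fin 2) (Fin 2) ℂ := !![0, 1; 0, 0]
def sm : Matrix (Fin 2) (Fin 2) ℂ := !![0, 0; 1, 0]
def np : Matrix (Fin 2) (Fin 2) ℂ := !![1, 0; 0, 0]
def nm : Matrix (Fin 2) (Fin 2) ℂ := !![0, 0; 0, 1]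

/-- `β₀ = e^{-β}/(e^{-β}+e^{β})`. -/
def b0 (β : ℝ) : ℝ := Real.exp (-β) / (Real.exp (-β) + Real.exp β)

/-- `β₁ = e^{β}/(e^{-β}+e^{β})`. -/
def b1 (β : ℝ) : ℝ := Real.exp β / (Real.exp (-β) + Real.exp β)

/-- The single-spin Gibbs state `ρ_β = diag(β₀, β₁)`. -/
def rhoB (β : ℝ) : Matrix (Fin 2) (Fin 2) ℂ := !![(b0 β : ℂ), 0; 0, (b1 β : ℂ)]

/-- The `N = 2` chain Hamiltonian `H_S = σz⊗I + I⊗σz + σx⊗σx + σy⊗σy`. -/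
def HS2 : Matrix (Fin 2 × Fin 2) (Fin 2 × Fin 2) ℂ :=
  sz ⊗ₖ (1 : Matrix (Fin 2) (Fin 2) ℂ) + (1 : Matrix (Fin 2) (Fin 2) ℂ) ⊗ₖ sz +
    sx ⊗ₖ sx + sy ⊗ₖ sy

/-- The two-bath adjoint Lindblad generator for `N = 2` (baths at sites 1 and 2). -/
def L2star (β β' : ℝ) (ρ : Matrix (Fin 2 × Fin 2) (Fin 2 × Fin 2) ℂ) :
    Matrix (Fin 2 × Fin 2) (Fin 2 × Fin 2) ℂ :=
  (-Complex.I) • (HS2 * ρ - ρ * HS2) +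
    (2 * b0 β : ℂ) • (2 • ((sp ⊗ₖ (1 : Matrix (Fin 2) (Fin 2) ℂ)) * ρ *
        (sm ⊗ₖ (1 : Matrix (Fin 2) (Fin 2) ℂ))) -
      ((nm ⊗ₖ (1 : Matrix (Fin 2) (Fin 2) ℂ)) * ρ + ρ * (nm ⊗ₖ (1 : Matrix (Fin 2) (Fin 2) ℂ)))) +
    (2 * b1 β : ℂ) • (2 • ((sm ⊗ₖ (1 : Matrix (Fin 2) (Fin 2) ℂ)) * ρ *
        (sp ⊗ₖ (1 : Matrix (Fin 2) (Fin 2) ℂ))) -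
      ((np ⊗ₖ (1 : Matrix (Fin 2) (Fin 2) ℂ)) * ρ + ρ * (np ⊗ₖ (1 : Matrix (Fin 2) (Fin 2) ℂ)))) +
    (2 * b0 β' : ℂ) • (2 • (((1 : Matrix (Fin 2) (Fin 2) ℂ) ⊗ₖ sp) * ρ *
        ((1 : Matrix (Fin 2) (Fin 2) ℂ) ⊗ₖ sm)) -
      (((1 : Matrix (Fin 2) (Fin 2) ℂ) ⊗ₖ nm) * ρ + ρ * ((1 : Matrix (Fin 2) (Fin 2) ℂ) ⊗ₖ nm))) +
    (2 * b1 β' : ℂ) • (2 • (((1 : Matrix (Fin 2) (Fin 2) ℂ) ⊗ₖ sm) * ρ *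
        ((1 : Matrix (Fin 2) (Fin 2) ℂ) ⊗ₖ sp)) -
      (((1 : Matrix (Fin 2) (Fin 2) ℂ) ⊗ₖ np) * ρ + ρ * ((1 : Matrix (Fin 2) (Fin 2) ℂ) ⊗ₖ np)))

/-- The explicit stationary state for `N = 2` baths at inverse temperatures `β, β'`. -/
def rbb (β β' : ℝ) : Matrix (Fin 2 × Fin 2) (Fin 2 × Fin 2) ℂ :=
  (((1 : ℂ) / 2) • (rhoB β + rhoB β')) ⊗ₖ (((1 : ℂ) / 2) • (rhoB β + rhoB β')) -
    (((b0 β - b0 β') ^ 2 / 8 : ℝ) : ℂ) • (sz ⊗ₖ sz) +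
    (((b0 β - b0 β') / 4 : ℝ) : ℂ) • (np ⊗ₖ nm - nm ⊗ₖ np) +
    (Complex.I * (((b0 β - b0 β') / 4 : ℝ) : ℂ)) • (sp ⊗ₖ sm - sm ⊗ₖ sp)

/-- The Hermitian matrices commuting with `σz⊗I + I⊗σz`: populations `a, p, q, d` of
`|00⟩, |01⟩, |10⟩, |11⟩` and coherence `c = ⟨01|ρ|10⟩`. -/
def sectorMatrix (a p q d : ℝ) (c : ℂ) : Matrix (Fin 2 × Fin 2) (Fin 2 × Fin 2) ℂ :=
  (a : ℂ) • np ⊗ₖ np + (p : ℂ) • np ⊗ₖ nm + (q : ℂ) • nm ⊗ₖ np + (d : ℂ) • nm ⊗ₖ nm +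
    c • sp ⊗ₖ sm + star c • sm ⊗ₖ sp

theorem isHermitian_sectorMatrix (a p q d : ℝ) (c : ℂ) : (sectorMatrix a p q d c).IsHermitian := by
  have hn : npᴴ = np ∧ nmᴴ = nm := by
    constructor <;> ext i j <;> fin_cases i <;> fin_cases j <;> simp [np, nm]
  have hs : spᴴ = sm ∧ smᴴ = sp := by
    constructor <;> ext i j <;> fin_cases i <;> fin_cases j <;> simp [sp, sm]
  simp only [IsHermitian, sectorMatrix, conjTranspose_add, conjTranspose_smul,
    conjTranspose_kronecker, hn, hs, Complex.star_def, Complex.conj_ofReal, Complex.conj_conj]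
  abel

theorem trace_sectorMatrix (a p q d : ℝ) (c : ℂ) :
    (sectorMatrix a p q d c).trace = a + p + q + d := by
  simp [sectorMatrix, trace_kronecker, trace_fin_two, np, nm, sp, sm]

theorem quadratic_form_nonneg_of_normSq_le_mul {p q : ℝ} {c : ℂ} (hp : 0 ≤ p) (hq : 0 ≤ q)
    (hc : normSq c ≤ p * q) (u w : ℂ) :
    0 ≤ p * normSq u + q * normSq w + 2 * (star u * c * w).re := by
  have hre : |(star u * c * w).re| ≤ ‖u‖ * ‖c‖ * ‖w‖ := by
    simpa using abs_re_le_norm (star u * c * w)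
  have hcpq : ‖c‖ ^ 2 ≤ p * q := by rwa [← normSq_eq_norm_sq]
  simp only [normSq_eq_norm_sq]
  -- `(p‖u‖² + q‖w‖²)² ≥ 4pq‖u‖²‖w‖² ≥ 4‖u‖²‖c‖²‖w‖² ≥ (2 Re (ū c w))²`
  nlinarith [abs_le.1 hre, sq_nonneg (p * ‖u‖ ^ 2 - q * ‖w‖ ^ 2), norm_nonneg u, norm_nonneg c,
    norm_nonneg w, mul_nonneg hp (sq_nonneg ‖u‖), mul_nonneg hq (sq_nonneg ‖w‖),
    mul_le_mul_of_nonneg_left hcpq (mul_nonneg (sq_nonneg ‖u‖) (sq_nonneg ‖w‖))]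

theorem dotProduct_sectorMatrix_mulVec (a p q d : ℝ) (c : ℂ) (v : Fin 2 × Fin 2 → ℂ) :
    star v ⬝ᵥ (sectorMatrix a p q d c *ᵥ v) =
      ((a * normSq (v (0, 0)) + d * normSq (v (1, 1)) +
        (p * normSq (v (0, 1)) + q * normSq (v (1, 0)) + 2 * (star (v (0, 1)) * c * v (1, 0)).re)
        : ℝ) : ℂ) := by
  simp [dotProduct, mulVec, Fintype.sum_prod_type, sectorMatrix, np, nm, sp, sm, Complex.ext_iff,
    normSq_apply]
  constructor <;> ring

theorem posSemidef_sectorMatrix {a p q d : ℝ} {c : ℂ} (ha : 0 ≤ a) (hp : 0 ≤ p) (hq : 0 ≤ q)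
    (hd : 0 ≤ d) (hc : normSq c ≤ p * q) : (sectorMatrix a p q d c).PosSemidef := by
  refine .of_dotProduct_mulVec_nonneg (isHermitian_sectorMatrix a p q d c) fun v => ?_
  rw [dotProduct_sectorMatrix_mulVec, Complex.zero_le_real]
  have := quadratic_form_nonneg_of_normSq_le_mul hp hq hc (v (0, 1)) (v (1, 0))
  have := mul_nonneg ha (normSq_nonneg (v (0, 0)))
  have := mul_nonneg hd (normSq_nonneg (v (1, 1)))
  linarith

set_option maxHeartbeats 400000 in
theorem L2star_sectorMatrix (β β' a p q d : ℝ) (c : ℂ) :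
    L2star β β' (sectorMatrix a p q d c) =
      sectorMatrix (4 * (b0 β * q + b0 β' * p - (b1 β + b1 β') * a))
        (4 * (b0 β * d + b1 β' * a - (b1 β + b0 β') * p - c.im))
        (4 * (b1 β * a + b0 β' * d - (b0 β + b1 β') * q + c.im))
        (4 * (b1 β * p + b1 β' * q - (b0 β + b0 β') * d))
        (2 * I * (p - q) - 2 * (b0 β + b1 β + b0 β' + b1 β') * c) := by
  ext ⟨i, k⟩ ⟨j, l⟩
  fin_cases i <;> fin_cases k <;> fin_cases j <;> fin_cases l <;>
    simp [L2star, HS2, sectorMatrix, sx, sy, sz, sp, sm, np, nm, mul_apply, Fintype.sum_prod_type,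
      one_apply, two_smul, Complex.ext_iff] <;>
    constructor <;> ring

theorem b0_add_b1 (β : ℝ) : b0 β + b1 β = 1 := by
  rw [b0, b1, ← add_div, div_self (by positivity)]

theorem b0_nonneg (β : ℝ) : 0 ≤ b0 β := by unfold b0; positivity

theorem b0_le_one (β : ℝ) : b0 β ≤ 1 := by
  linarith [b0_add_b1 β, show 0 ≤ b1 β by unfold b1; positivity]

theorem b1_eq_one_sub_b0 (β : ℝ) : b1 β = 1 - b0 β := by linarith [b0_add_b1 β]

def stationarySector (x y : ℝ) : Matrix (Fin 2 × Fin 2) (Fin 2 × Fin 2) ℂ :=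
  let m := (x + y) / 2
  let δ := x - y
  sectorMatrix (m ^ 2 - δ ^ 2 / 8) (m * (1 - m) + δ ^ 2 / 8 + δ / 4)
    (m * (1 - m) + δ ^ 2 / 8 - δ / 4) ((1 - m) ^ 2 - δ ^ 2 / 8) (I * (δ / 4 : ℝ))

theorem rbb_eq_stationarySector (β β' : ℝ) : rbb β β' = stationarySector (b0 β) (b0 β') := by
  ext ⟨i, k⟩ ⟨j, l⟩
  fin_cases i <;> fin_cases k <;> fin_cases j <;> fin_cases l <;>
    simp [rbb, stationarySector, sectorMatrix, rhoB, b1_eq_one_sub_b0, sz, sp, sm, np, nm] <;> ring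

theorem trace_stationarySector (x y : ℝ) : (stationarySector x y).trace = 1 := by
  rw [stationarySector, trace_sectorMatrix]
  push_cast
  ring

theorem three_mul_abs_sub_div_eight_le {x y : ℝ} (hx₀ : 0 ≤ x) (hx₁ : x ≤ 1) (hy₀ : 0 ≤ y)
    (hy₁ : y ≤ 1) : 3 * |x - y| / 8 ≤ (x + y) / 2 * (1 - (x + y) / 2) + (x - y) ^ 2 / 8 := by
  -- for `x ≥ y` the difference is `y (1 - x) + (x - y)(1 - (x - y)) / 8`
  rcases abs_cases (x - y) with ⟨h, hxy⟩ | ⟨h, hxy⟩ <;> rw [h]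
  · nlinarith [mul_nonneg hy₀ (sub_nonneg.2 hx₁), mul_nonneg hxy (by linarith : 0 ≤ 1 - (x - y))]
  · nlinarith [mul_nonneg hx₀ (sub_nonneg.2 hy₁), mul_nonneg (neg_nonneg.2 hxy.le)
      (by linarith : 0 ≤ 1 + (x - y))]

theorem posSemidef_stationarySector {x y : ℝ} (hx₀ : 0 ≤ x) (hx₁ : x ≤ 1) (hy₀ : 0 ≤ y)
    (hy₁ : y ≤ 1) : (stationarySector x y).PosSemidef := by
  have hs := three_mul_abs_sub_div_eight_le hx₀ hx₁ hy₀ hy₁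
  have hδ := sq_abs (x - y)
  have hδ₀ := abs_nonneg (x - y)
  apply posSemidef_sectorMatrix
  · nlinarith [mul_nonneg hx₀ hy₀]
  · linarith [neg_abs_le (x - y)]
  · linarith [le_abs_self (x - y)]
  · nlinarith [mul_nonneg (sub_nonneg.2 hx₁) (sub_nonneg.2 hy₁)]
  · rw [normSq_mul, normSq_I, normSq_ofReal]
    nlinarith

theorem L2star_stationarySector (β β' : ℝ) :
    L2star β β' (stationarySector (b0 β) (b0 β')) = 0 := by
  rw [stationarySector, L2star_sectorMatrix]
  convert_to sectorMatrix 0 0 0 0 0 = 0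
  · simp only [b1_eq_one_sub_b0, mul_im, I_re, I_im, ofReal_re, ofReal_im]
    congr 1 <;> push_cast <;> ring
  · simp [sectorMatrix]

/-- For `N = 2`, the explicit matrix `ρ^{β,β'}` is a density matrix and is stationary
for the two-bath adjoint Lindblad generator. -/
theorem rbb_is_stationary_density (β β' : ℝ) :
    (rbb β β').IsHermitian ∧ (rbb β β').PosSemidef ∧ (rbb β β').trace = 1 ∧
      L2star β β' (rbb β β') = 0 := by
  have hpsd :=
    posSemidef_stationarySector (b0_nonneg β) (b0_le_one β) (b0_nonneg β') (b0_le_one β')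
  rw [rbb_eq_stationarySector]
  exact ⟨hpsd.isHermitian, hpsd, trace_stationarySector _ _, L2star_stationarySector β β'⟩
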